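/- For an irrational real number x, the limsup over integers q → ∞ of log(1/dist(qx,ℤ))/q equals the infimum of the set of B ∈ [0,∞) such that e^{Bq}·dist(qx,ℤ) → +∞ as q → +∞, and also equals the infimum of the set of B ∈ [0,∞) such that there exist C > 0 and Q with dist(qx,ℤ) ≥ C e^{-Bq} for all q ≥ Q. -/

import Mathlib

open Filter
open scoped ENNReal

/-- Distance from a real number to the nearest integer. -/
noncomputable def distZ (y : ℝ) : ℝ := |y - round y|

/-- The exponential type of `x`: `limsup_{q→∞} log(1/dist(qx,ℤ))/q`, valued in `[0,∞]`. -/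
noncomputable def Bsup (x : ℝ) : ℝ≥0∞ :=
  Filter.limsup (fun q : ℕ => ENNReal.ofReal (Real.log (distZ ((q : ℝ) * x))⁻¹ / (q : ℝ)))
    Filter.atTop

/-!
A lower bound `dist(qx,ℤ) ≥ C e^{-bq}` gives `log(1/dist(qx,ℤ))/q ≤ b + log(1/C)/q`, hence
`Bsup x ≤ b`. Conversely, if `Bsup x < b`, choose `Bsup x < c < b`: eventually
`dist(qx,ℤ) > e^{-cq}`, so `e^{bq} dist(qx,ℤ) ≥ e^{(b-c)q} → ∞`, and such a growth gives a
lower bound with `C = 1`. Thus both infima are squeezed between `Bsup x` and every `b > Bsup x`.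
-/

lemma distZ_pos_of_irrational {y : ℝ} (hy : Irrational y) : 0 < distZ y :=
  abs_pos.2 (sub_ne_zero.2 (hy.ne_int _))

lemma Bsup_le_ofReal {x b C : ℝ} (hC : 0 < C)
    (h : ∀ᶠ q : ℕ in atTop, C * Real.exp (-b * q) ≤ distZ ((q : ℝ) * x)) :
    Bsup x ≤ ENNReal.ofReal b := by
  have hlim : Tendsto (fun q : ℕ => ENNReal.ofReal (Real.log C⁻¹ / q + b)) atTop
      (nhds (ENNReal.ofReal b)) := by
    refine ENNReal.tendsto_ofReal ?_
    simpa using (tendsto_const_div_atTop_nhds_zero_nat (Real.log C⁻¹)).add_const b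
  have hle : ∀ᶠ q : ℕ in atTop, ENNReal.ofReal (Real.log (distZ ((q : ℝ) * x))⁻¹ / q) ≤
      ENNReal.ofReal (Real.log C⁻¹ / q + b) := by
    filter_upwards [h, eventually_gt_atTop 0] with q hq hq0
    have hlog : Real.log C - b * q ≤ Real.log (distZ ((q : ℝ) * x)) := by
      have := Real.log_le_log (by positivity) hq
      rwa [Real.log_mul hC.ne' (Real.exp_ne_zero _), Real.log_exp, neg_mul,
        ← sub_eq_add_neg] at this
    refine ENNReal.ofReal_le_ofReal ?_
    rw [Real.log_inv, Real.log_inv, div_add' _ _ _ (by positivity)]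
    gcongr
    linarith
  exact (limsup_le_limsup hle).trans_eq hlim.limsup_eq

lemma tendsto_exp_mul_distZ_of_Bsup_lt {x b : ℝ} (hx : Irrational x)
    (h : Bsup x < ENNReal.ofReal b) :
    Tendsto (fun q : ℕ => Real.exp (b * q) * distZ ((q : ℝ) * x)) atTop atTop := by
  obtain ⟨c, -, hBc, hcb⟩ := ENNReal.lt_iff_exists_real_btwn.1 h
  have hcb : c < b := (ENNReal.ofReal_lt_ofReal_iff'.1 hcb).1
  have hgrowth : Tendsto (fun q : ℕ => Real.exp ((b - c) * q)) atTop atTop :=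
    Real.tendsto_exp_atTop.comp
      (tendsto_natCast_atTop_atTop.const_mul_atTop (sub_pos.2 hcb))
  refine tendsto_atTop_mono' atTop ?_ hgrowth
  filter_upwards [eventually_lt_of_limsup_lt hBc, eventually_gt_atTop 0] with q hq hq0
  have hδ : 0 < distZ ((q : ℝ) * x) :=
    distZ_pos_of_irrational (hx.natCast_mul (Nat.pos_iff_ne_zero.1 hq0))
  have hlog : -(c * q) < Real.log (distZ ((q : ℝ) * x)) := by
    have := (ENNReal.ofReal_lt_ofReal_iff'.1 hq).1
    rw [Real.log_inv, div_lt_iff₀ (by positivity)] at this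
    linarith
  calc Real.exp ((b - c) * q) = Real.exp (b * q) * Real.exp (-(c * q)) := by
        rw [← Real.exp_add]; ring_nf
    _ ≤ Real.exp (b * q) * distZ ((q : ℝ) * x) := by
        gcongr
        exact ((Real.lt_log_iff_exp_lt hδ).1 hlog).le

/-- For irrational `x`, the exponential type equals the infimum of the set of `B ∈ [0,∞)`
such that `e^{Bq} dist(qx,ℤ) → ∞`, and also the infimum of the set of `B ∈ [0,∞)` such
that `dist(qx,ℤ) ≥ C e^{-Bq}` eventually, for some `C > 0`.  (In `ℝ≥0∞`, `sInf ∅ = ∞`.) -/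
theorem stmt6 (x : ℝ) (hx : Irrational x) :
    Bsup x = sInf {B : ℝ≥0∞ | ∃ b : ℝ, 0 ≤ b ∧ B = ENNReal.ofReal b ∧
        Tendsto (fun q : ℕ => Real.exp (b * q) * distZ ((q : ℝ) * x)) atTop atTop} ∧
    Bsup x = sInf {B : ℝ≥0∞ | ∃ b : ℝ, 0 ≤ b ∧ B = ENNReal.ofReal b ∧
        ∃ C > (0 : ℝ), ∃ Q : ℕ, ∀ q : ℕ, Q ≤ q →
          C * Real.exp (-b * q) ≤ distZ ((q : ℝ) * x)} := by
  set S₁ := {B : ℝ≥0∞ | ∃ b : ℝ, 0 ≤ b ∧ B = ENNReal.ofReal b ∧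
    Tendsto (fun q : ℕ => Real.exp (b * q) * distZ ((q : ℝ) * x)) atTop atTop}
  set S₂ := {B : ℝ≥0∞ | ∃ b : ℝ, 0 ≤ b ∧ B = ENNReal.ofReal b ∧
    ∃ C > (0 : ℝ), ∃ Q : ℕ, ∀ q : ℕ, Q ≤ q → C * Real.exp (-b * q) ≤ distZ ((q : ℝ) * x)}
  have hS₂ : Bsup x ≤ sInf S₂ := le_sInf <| by
    rintro _ ⟨b, -, rfl, C, hC, Q, h⟩
    exact Bsup_le_ofReal hC (eventually_atTop.2 ⟨Q, h⟩)
  have hS₁₂ : S₁ ⊆ S₂ := by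
    rintro _ ⟨b, hb, rfl, h⟩
    obtain ⟨Q, hQ⟩ := eventually_atTop.1 (h.eventually_ge_atTop 1)
    refine ⟨b, hb, rfl, 1, one_pos, Q, fun q hq => ?_⟩
    have := mul_le_mul_of_nonneg_left (hQ q hq) (Real.exp_pos (-b * q)).le
    rwa [← mul_assoc, ← Real.exp_add, neg_mul, neg_add_cancel, Real.exp_zero, one_mul,
      mul_one, ← neg_mul, ← one_mul (Real.exp _)] at this
  have hS₁ : sInf S₁ ≤ Bsup x := le_of_forall_gt fun c hc => by
    obtain ⟨b, hb, hBb, hbc⟩ := ENNReal.lt_iff_exists_real_btwn.1 hc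
    have hb₁ : ENNReal.ofReal b ∈ S₁ := ⟨b, hb, rfl, tendsto_exp_mul_distZ_of_Bsup_lt hx hBb⟩
    exact (sInf_le hb₁).trans_lt hbc
  have hS₂₁ : sInf S₂ ≤ sInf S₁ := sInf_le_sInf hS₁₂
  exact ⟨le_antisymm (hS₂.trans hS₂₁) hS₁, le_antisymm hS₂ (hS₂₁.trans hS₁)⟩
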